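/- Let X ⊆ ℝⁿ be a closed convex set containing 0 in its interior, let F be a linear subspace of ℝⁿ, and let Π_F denote the orthogonal projection of ℝⁿ onto F. For a subset Y of F write Y^{ℏ,F} = {p ∈ F : ∀ x ∈ Y, ⟨x, p⟩ ≤ ℏ} for the ℏ-polar dual taken inside F. Then (Π_F X)^{ℏ,F} = X^ℏ ∩ F and (X ∩ F)^{ℏ,F} = Π_F(X^ℏ). -/

import Mathlib

open scoped RealInnerProductSpace

noncomputable section

/-- `ℝⁿ` with its Euclidean structure. -/
abbrev En (n : ℕ) := EuclideanSpace ℝ (Fin n)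

/-- The `ℏ`-polar dual `Xᵸ = {p : ∀ x ∈ X, ⟨x, p⟩ ≤ ℏ}`. -/
def polarDual (n : ℕ) (ℏ : ℝ) (X : Set (En n)) : Set (En n) :=
  {p | ∀ x ∈ X, ⟪x, p⟫ ≤ ℏ}

/-- The `ℏ`-polar dual of `Y` taken inside the subspace `F`:
`Y^{ℏ,F} = {p ∈ F : ∀ x ∈ Y, ⟨x, p⟩ ≤ ℏ}`. -/
def polarDualIn (n : ℕ) (ℏ : ℝ) (F : Submodule ℝ (En n)) (Y : Set (En n)) : Set (En n) :=
  {p | p ∈ F ∧ ∀ x ∈ Y, ⟪x, p⟫ ≤ ℏ}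

/-!
Polar duality is order reversing and, for closed convex sets containing `0`, an involution
(bipolar theorem, by Hahn–Banach separation). Since `Π_F` is self-adjoint and fixes `F`,
`⟨Π_F x, p⟩ = ⟨x, p⟩` for `p ∈ F`, which gives the first identity directly. For the second,
`K = Π_F (Xᵸ)` is compact (as `Xᵸ` is bounded when `0 ∈ int X`) and convex, so `K = Kᵸᵸ`; and for
`y ∈ Kᵸ` the first identity applied to `Xᵸ` puts `Π_F y` in `Xᵸᵸ ∩ F = X ∩ F`, so every
`q ∈ (X ∩ F)^{ℏ,F}` pairs with `y` to at most `ℏ`.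
-/

open Set Metric

theorem Submodule.inner_starProjection_left_of_mem {E : Type*} [NormedAddCommGroup E]
    [InnerProductSpace ℝ E] (K : Submodule ℝ E) [K.HasOrthogonalProjection] {p : E}
    (hp : p ∈ K) (x : E) : ⟪K.starProjection x, p⟫ = ⟪x, p⟫ := by
  rw [inner_starProjection_left_eq_right, starProjection_eq_self_iff.mpr hp]

section PolarDual

variable {n : ℕ} {ℏ : ℝ}

theorem polarDualIn_eq (F : Submodule ℝ (En n)) (Y : Set (En n)) :
    polarDualIn n ℏ F Y = polarDual n ℏ Y ∩ F :=
  inter_comm _ _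

theorem polarDual_eq_biInter (X : Set (En n)) :
    polarDual n ℏ X = ⋂ x ∈ X, {p | ⟪x, p⟫ ≤ ℏ} := by
  ext p
  simp [polarDual]

theorem isClosed_polarDual (X : Set (En n)) : IsClosed (polarDual n ℏ X) := by
  rw [polarDual_eq_biInter]
  exact isClosed_biInter fun x _ => isClosed_le (continuous_const.inner continuous_id)
    continuous_const

theorem convex_polarDual (X : Set (En n)) : Convex ℝ (polarDual n ℏ X) := by
  rw [polarDual_eq_biInter]
  exact convex_iInter₂ fun x _ => convex_halfSpace_le (innerSL ℝ x).toLinearMap.isLinear ℏ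

theorem zero_mem_polarDual (hℏ : 0 ≤ ℏ) (X : Set (En n)) : (0 : En n) ∈ polarDual n ℏ X :=
  fun x _ => by simpa using hℏ

theorem polarDual_anti {X Y : Set (En n)} (h : X ⊆ Y) : polarDual n ℏ Y ⊆ polarDual n ℏ X :=
  fun _ hp _ hx => hp _ (h hx)

theorem polarDual_ball_subset {ε : ℝ} (hε : 0 < ε) :
    polarDual n ℏ (ball 0 ε) ⊆ closedBall 0 (2 * ℏ / ε) := by
  intro p hp
  -- `x` is `p` rescaled to norm `ε / 2`, or `0` when `p = 0`
  set x : En n := (ε / (2 * ‖p‖)) • p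
  have hx : x ∈ ball (0 : En n) ε := by
    rw [mem_ball_zero_iff, norm_smul, Real.norm_of_nonneg (by positivity)]
    rcases (norm_nonneg p).eq_or_lt with hp0 | hp0
    · rw [← hp0, mul_zero]; exact hε
    · rw [div_mul_eq_mul_div, mul_div_mul_right _ _ hp0.ne']; linarith
  have hxp : ⟪x, p⟫ = ε * ‖p‖ / 2 := by
    rw [real_inner_smul_left, real_inner_self_eq_norm_sq]
    rcases (norm_nonneg p).eq_or_lt with hp0 | hp0
    · simp [← hp0]
    · field_simp
  have := hp x hx
  rw [mem_closedBall_zero_iff, le_div_iff₀ hε]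
  linarith

theorem isBounded_polarDual {X : Set (En n)} (h0 : (0 : En n) ∈ interior X) :
    Bornology.IsBounded (polarDual n ℏ X) := by
  obtain ⟨ε, hε, hball⟩ := Metric.mem_nhds_iff.mp (mem_interior_iff_mem_nhds.mp h0)
  exact isBounded_closedBall.subset ((polarDual_anti hball).trans (polarDual_ball_subset hε))

theorem isCompact_polarDual {X : Set (En n)} (h0 : (0 : En n) ∈ interior X) :
    IsCompact (polarDual n ℏ X) :=
  isCompact_of_isClosed_isBounded (isClosed_polarDual X) (isBounded_polarDual h0)

theorem polarDual_polarDual (hℏ : 0 < ℏ) {K : Set (En n)} (hcl : IsClosed K)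
    (hconv : Convex ℝ K) (h0 : (0 : En n) ∈ K) :
    polarDual n ℏ (polarDual n ℏ K) = K := by
  refine Subset.antisymm (fun y hy => ?_) fun y hy p hp => real_inner_comm y p ▸ hp y hy
  by_contra hyK
  obtain ⟨f, u, hfK, hfy⟩ := geometric_hahn_banach_closed_point hconv hcl hyK
  have hu : 0 < u := by simpa using hfK 0 h0
  -- the separating functional, rescaled to equal `ℏ` on the separating hyperplane
  set p := (ℏ / u) • (InnerProductSpace.toDual ℝ (En n)).symm f
  have hp : ∀ x, ⟪x, p⟫ = ℏ / u * f x := fun x => by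
    rw [real_inner_smul_right, real_inner_comm, InnerProductSpace.toDual_symm_apply]
  have hpK : p ∈ polarDual n ℏ K := fun x hx => by
    calc ⟪x, p⟫ = ℏ / u * f x := hp x
      _ ≤ ℏ / u * u := by gcongr; exact (hfK x hx).le
      _ = ℏ := div_mul_cancel₀ ℏ hu.ne'
  have hyp : ℏ / u * f y ≤ ℏ := by simpa [real_inner_comm, hp] using hy p hpK
  have : ℏ / u * u < ℏ / u * f y := by gcongr
  rw [div_mul_cancel₀ ℏ hu.ne'] at this
  linarith

variable (F : Submodule ℝ (En n))

theorem polarDual_image_starProjection_inter (Y : Set (En n)) :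
    polarDual n ℏ (F.starProjection '' Y) ∩ F = polarDual n ℏ Y ∩ F := by
  ext p
  simp only [mem_inter_iff, polarDual, mem_ofPred_eq, forall_mem_image, SetLike.mem_coe]
  refine and_congr_left fun hpF => ?_
  simp only [F.inner_starProjection_left_of_mem hpF]

theorem starProjection_mem_polarDual_image {Y : Set (En n)} {p : En n}
    (hp : p ∈ polarDual n ℏ (F.starProjection '' Y)) :
    F.starProjection p ∈ polarDual n ℏ (F.starProjection '' Y) := by
  rintro _ ⟨x, hx, rfl⟩
  rw [← F.inner_starProjection_left_eq_right,
    F.starProjection_eq_self_iff.mpr (F.starProjection_apply_mem x)]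
  exact hp _ ⟨x, hx, rfl⟩

theorem image_starProjection_polarDual_subset (X : Set (En n)) :
    F.starProjection '' polarDual n ℏ X ⊆ polarDual n ℏ (X ∩ F) ∩ F := by
  rintro _ ⟨p, hp, rfl⟩
  refine ⟨fun x hx => ?_, F.starProjection_apply_mem p⟩
  rw [← F.inner_starProjection_left_eq_right, F.starProjection_eq_self_iff.mpr hx.2]
  exact hp x hx.1

theorem polarDual_inter_subset_image_starProjection (hℏ : 0 < ℏ) {X : Set (En n)}
    (hXcl : IsClosed X) (hXconv : Convex ℝ X) (h0 : (0 : En n) ∈ interior X) :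
    polarDual n ℏ (X ∩ F) ∩ F ⊆ F.starProjection '' polarDual n ℏ X := by
  set K := F.starProjection '' polarDual n ℏ X
  have hKcl : IsClosed K :=
    ((isCompact_polarDual h0).image F.starProjection.continuous).isClosed
  have hKconv : Convex ℝ K := (convex_polarDual X).linear_image F.starProjection.toLinearMap
  have hK0 : (0 : En n) ∈ K := ⟨0, zero_mem_polarDual hℏ.le X, map_zero _⟩
  rintro q ⟨hq, hqF⟩
  rw [← polarDual_polarDual hℏ hKcl hKconv hK0]
  intro y hy
  have hPy : F.starProjection y ∈ X ∩ F := by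
    have : F.starProjection y ∈ polarDual n ℏ (polarDual n ℏ X) ∩ F := by
      rw [← polarDual_image_starProjection_inter]
      exact ⟨starProjection_mem_polarDual_image F hy, F.starProjection_apply_mem y⟩
    rwa [polarDual_polarDual hℏ hXcl hXconv (interior_subset h0)] at this
  rw [← F.inner_starProjection_left_of_mem hqF]
  exact hq _ hPy

end PolarDual

/-- polar duality exchanges orthogonal projections and intersections:
`(Π_F X)^{ℏ,F} = Xᵸ ∩ F` and `(X ∩ F)^{ℏ,F} = Π_F (Xᵸ)` for a closed convex `X`
containing `0` in its interior. -/
theorem stmt1 (n : ℕ) (ℏ : ℝ) (hℏ : 0 < ℏ) (X : Set (En n))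
    (hXcl : IsClosed X) (hXconv : Convex ℝ X) (h0 : (0 : En n) ∈ interior X)
    (F : Submodule ℝ (En n)) :
    polarDualIn n ℏ F ((fun z => (F.orthogonalProjection z : En n)) '' X)
      = polarDual n ℏ X ∩ (F : Set (En n)) ∧
    polarDualIn n ℏ F (X ∩ (F : Set (En n)))
      = (fun z => (F.orthogonalProjection z : En n)) '' polarDual n ℏ X := by
  simp only [Submodule.coe_orthogonalProjectionOnto_apply, polarDualIn_eq]
  exact ⟨polarDual_image_starProjection_inter F X,
    (polarDual_inter_subset_image_starProjection F hℏ hXcl hXconv h0).antisymm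
      (image_starProjection_polarDual_subset F X)⟩
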